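/- arXiv:1210.4072 — 4 statements merged into one kernel-verified Lean document; each statement's English description precedes it below -/
import Mathlib

section
/- Let ω : [0,∞) → [0,∞) be a modulus of continuity (continuous, increasing, concave, ω(0)=0) which is differentiable at 0 with ω'(0) < ∞, and suppose that (ω(ξ) − ω'(0)ξ)/ξ² → −∞ as ξ → 0+. If f : ℝ² → ℝ is C² with bounded second derivatives and f obeys ω, i.e. |f(x) − f(y)| ≤ ω(|x−y|) for all x, y ∈ ℝ², then for every r > 0 one has sup_{x ∈ B_r} |∇f(x)| < ω'(0). -/
open Filter Set

/-- If a `C²` function with bounded second derivative obeys a modulus of continuity ω with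
ω'(0) finite and ω''(0+) = −∞, then on any ball the gradient is strictly below ω'(0). -/
theorem stmt2 (ω : ℝ → ℝ) (K : ℝ)
    (hωcont : Continuous ω) (hωmono : MonotoneOn ω (Set.Ici 0))
    (hωconc : ConcaveOn ℝ (Set.Ici 0) ω) (hω0 : ω 0 = 0)
    (hωnn : ∀ ξ, 0 ≤ ξ → 0 ≤ ω ξ)
    (hK : HasDerivWithinAt ω K (Set.Ici 0) 0)
    (hsec : Tendsto (fun ξ : ℝ => (ω ξ - K * ξ) / ξ ^ 2) (nhdsWithin 0 (Set.Ioi 0)) atBot)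
    (f : EuclideanSpace ℝ (Fin 2) → ℝ) (hf : ContDiff ℝ 2 f)
    (hf2 : ∃ C, ∀ x, ‖iteratedFDeriv ℝ 2 f x‖ ≤ C)
    (hobey : ∀ x y, |f x - f y| ≤ ω ‖x - y‖) :
    ∀ r : ℝ, 0 < r → ∃ c, c < K ∧
      ∀ x ∈ Metric.ball (0 : EuclideanSpace ℝ (Fin 2)) r, ‖gradient f x‖ ≤ c := by
  obtain ⟨C, hC⟩ := hf2
  have hC0 : 0 ≤ C := (norm_nonneg _).trans (hC 0)
  -- pick t > 0 with (ω t - K t)/t² ≤ -(C+1)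
  have hEv : ∀ᶠ ξ in nhdsWithin (0:ℝ) (Set.Ioi 0),
      (ω ξ - K * ξ) / ξ ^ 2 ≤ -(C + 1) := hsec.eventually (eventually_le_atBot _)
  obtain ⟨t, h1, h2⟩ := (hEv.and (eventually_mem_nhdsWithin)).exists
  have ht : (0:ℝ) < t := h2
  have hωt : ω t ≤ K * t - (C + 1) * t ^ 2 := by
    have h := (div_le_iff₀ (by positivity : (0:ℝ) < t ^ 2)).mp h1
    nlinarith
  have hωtnn : 0 ≤ ω t := hωnn t ht.le
  -- differentiability facts
  have hdiff : Differentiable ℝ f := hf.differentiable (by norm_num)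
  have hg : ContDiff ℝ 1 (fderiv ℝ f) := hf.fderiv_right (by norm_num)
  -- second derivative bound as an operator bound
  have hC2 : ∀ z, ‖fderiv ℝ (fderiv ℝ f) z‖ ≤ C := by
    intro z
    refine ContinuousLinearMap.opNorm_le_bound _ hC0 fun v => ?_
    refine ContinuousLinearMap.opNorm_le_bound _ (by positivity) fun w => ?_
    have he : fderiv ℝ (fderiv ℝ f) z v w = iteratedFDeriv ℝ 2 f z ![v, w] := by
      rw [iteratedFDeriv_two_apply]
      simp
    rw [he]
    calc ‖iteratedFDeriv ℝ 2 f z ![v, w]‖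
        ≤ ‖iteratedFDeriv ℝ 2 f z‖ * ∏ i, ‖(![v, w]) i‖ :=
          (iteratedFDeriv ℝ 2 f z).le_opNorm _
      _ = ‖iteratedFDeriv ℝ 2 f z‖ * (‖v‖ * ‖w‖) := by
          rw [Fin.prod_univ_two]; simp
      _ ≤ C * (‖v‖ * ‖w‖) := by
          gcongr
          exact hC z
      _ = C * ‖v‖ * ‖w‖ := by ring
  -- the gradient of f is C-Lipschitz
  have hLip : ∀ a b : EuclideanSpace ℝ (Fin 2),
      ‖fderiv ℝ f a - fderiv ℝ f b‖ ≤ C * ‖a - b‖ := fun a b =>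
    convex_univ.norm_image_sub_le_of_norm_fderiv_le
      (fun z _ => (hg.differentiable one_ne_zero z)) (fun z _ => hC2 z)
      (Set.mem_univ b) (Set.mem_univ a)
  -- uniform bound on the gradient
  have main : ∀ x : EuclideanSpace ℝ (Fin 2), ‖gradient f x‖ ≤ K - t := by
    intro x
    have hfd : fderiv ℝ f x = InnerProductSpace.toDual ℝ _ (gradient f x) :=
      ((hdiff x).hasGradientAt.hasFDerivAt).fderiv
    by_cases h0 : gradient f x = 0
    · rw [h0, norm_zero]
      nlinarith
    have hn : ‖gradient f x‖ ≠ 0 := norm_ne_zero_iff.mpr h0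
    set g := gradient f x with hgdef
    set v : EuclideanSpace ℝ (Fin 2) := ‖g‖⁻¹ • g with hvdef
    have hv : ‖v‖ = 1 := by
      rw [hvdef, norm_smul, norm_inv, norm_norm]
      field_simp
    set h : EuclideanSpace ℝ (Fin 2) := t • v with hhdef
    have hh : ‖h‖ = t := by
      rw [hhdef, norm_smul, hv, Real.norm_eq_abs, abs_of_pos ht, mul_one]
    -- Taylor bound
    have hT : ‖f (x + h) - f x - fderiv ℝ f x ((x + h) - x)‖ ≤ (C * t) * ‖(x + h) - x‖ := by
      refine (convex_closedBall x t).norm_image_sub_le_of_norm_hasFDerivWithin_le'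
        (f' := fun z => fderiv ℝ f z) (fun z _ => ((hdiff z).hasFDerivAt).hasFDerivWithinAt)
        (fun z hz => ?_) (Metric.mem_closedBall_self ht.le) ?_
      · calc ‖fderiv ℝ f z - fderiv ℝ f x‖ ≤ C * ‖z - x‖ := hLip z x
          _ ≤ C * t := by
            have : ‖z - x‖ ≤ t := by
              simpa [dist_eq_norm] using Metric.mem_closedBall.mp hz
            nlinarith
      · simp [Metric.mem_closedBall, dist_eq_norm, hh]
    have hxh : (x + h) - x = h := by abel
    rw [hxh, hh] at hT
    -- compute the linear term
    have hlin : fderiv ℝ f x h = t * ‖g‖ := by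
      rw [hfd, InnerProductSpace.toDual_apply_apply, hhdef, hvdef,
        real_inner_smul_right, real_inner_smul_right, real_inner_self_eq_norm_mul_norm]
      field_simp
    rw [hlin] at hT
    have habs : |f (x + h) - f x| ≤ ω t := by
      have := hobey (x + h) x
      rwa [hxh, hh] at this
    have h3 : f (x + h) - f x ≤ ω t := (abs_le.mp habs).2
    have h4 : t * ‖g‖ - (f (x + h) - f x) ≤ C * t * t := by
      have := (abs_le.mp (by simpa [abs_sub_comm] using hT)).2
      linarith
    have e1 : C * t * t = C * t ^ 2 := by ring
    have e2 : C * t ^ 2 + (K * t - (C + 1) * t ^ 2) = t * (K - t) := by ring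
    have h5 : t * ‖g‖ ≤ t * (K - t) := by linarith
    exact le_of_mul_le_mul_left h5 ht
  intro r hr
  refine ⟨K - t, by linarith, fun x _ => main x⟩
end

section
/- Let ω(ξ) = ξ − ξ^{3/2}. Then for every α ∈ [1,2) and ξ ∈ (0,δ] with δ ≤ 1, ∫₀^{ξ/2} (ω(ξ+2η) + ω(ξ−2η) − 2ω(ξ)) / η^{1+α} dη ≤ −(3/4) ξ^{3/2−α}. -/
open Real MeasureTheory intervalIntegral Set

private lemma hasDerivAt_phi (ξ c s : ℝ) :
    HasDerivAt (fun s => (ξ + s) ^ ((3:ℝ)/2) + (ξ - s) ^ ((3:ℝ)/2) - c * s ^ 2)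
      ((3/2) * (ξ + s) ^ ((1:ℝ)/2) - (3/2) * (ξ - s) ^ ((1:ℝ)/2) - c * (2 * s)) s := by
  have e : (3:ℝ)/2 - 1 = 1/2 := by norm_num
  have h1 : HasDerivAt (fun s : ℝ => (ξ + s) ^ ((3:ℝ)/2))
      ((3/2) * (ξ + s) ^ ((1:ℝ)/2)) s := by
    have h := (Real.hasDerivAt_rpow_const (x := ξ + s) (p := (3:ℝ)/2)
      (Or.inr (by norm_num))).comp s ((hasDerivAt_id s).const_add ξ)
    exact h.congr_deriv (by rw [e]; ring)
  have h2 : HasDerivAt (fun s : ℝ => (ξ - s) ^ ((3:ℝ)/2))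
      (-((3/2) * (ξ - s) ^ ((1:ℝ)/2))) s := by
    have h := (Real.hasDerivAt_rpow_const (x := ξ - s) (p := (3:ℝ)/2)
      (Or.inr (by norm_num))).comp s ((hasDerivAt_id s).const_sub ξ)
    exact h.congr_deriv (by rw [e]; ring)
  have h3 : HasDerivAt (fun s : ℝ => c * s ^ 2) (c * (2 * s)) s := by
    simpa [mul_comm] using ((hasDerivAt_pow 2 s).const_mul c)
  exact (h1.add h2).sub h3

private lemma phi_lower (ξ : ℝ) (hξ : 0 < ξ) (t : ℝ) (ht0 : 0 ≤ t) (htξ : t ≤ ξ) :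
    2 * ξ ^ ((3:ℝ)/2) + (3 / (4 * Real.sqrt (2*ξ))) * t ^ 2
      ≤ (ξ + t) ^ ((3:ℝ)/2) + (ξ - t) ^ ((3:ℝ)/2) := by
  set c := 3 / (4 * Real.sqrt (2*ξ)) with hc
  have hm0 : 0 < Real.sqrt (2*ξ) := Real.sqrt_pos.2 (by linarith)
  have hmono : MonotoneOn
      (fun s => (ξ + s) ^ ((3:ℝ)/2) + (ξ - s) ^ ((3:ℝ)/2) - c * s ^ 2) (Icc 0 ξ) := by
    apply monotoneOn_of_deriv_nonneg (convex_Icc 0 ξ)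
    · exact fun s _ => (hasDerivAt_phi ξ c s).continuousAt.continuousWithinAt
    · exact fun s _ => (hasDerivAt_phi ξ c s).differentiableAt.differentiableWithinAt
    · intro s hs
      rw [interior_Icc, mem_Ioo] at hs
      rw [(hasDerivAt_phi ξ c s).deriv]
      have hsa : (ξ + s) ^ ((1:ℝ)/2) = Real.sqrt (ξ + s) := by
        rw [Real.sqrt_eq_rpow]
      have hsb : (ξ - s) ^ ((1:ℝ)/2) = Real.sqrt (ξ - s) := by
        rw [Real.sqrt_eq_rpow]
      rw [hsa, hsb, hc]
      set a := Real.sqrt (ξ + s)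
      set b := Real.sqrt (ξ - s)
      set m := Real.sqrt (2*ξ)
      have ha2 : a ^ 2 = ξ + s := Real.sq_sqrt (by linarith)
      have hb2 : b ^ 2 = ξ - s := Real.sq_sqrt (by linarith)
      have hm2 : m ^ 2 = 2 * ξ := Real.sq_sqrt (by linarith)
      have hab : b ≤ a := Real.sqrt_le_sqrt (by linarith)
      have ham : a ≤ m := Real.sqrt_le_sqrt (by linarith)
      have hbm : b ≤ m := Real.sqrt_le_sqrt (by linarith)
      have key : s ≤ m * (a - b) := by
        nlinarith [mul_le_mul_of_nonneg_left (add_le_add ham hbm) (sub_nonneg.2 hab)]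
      rw [sub_nonneg, div_mul_eq_mul_div, div_le_iff₀ (by positivity)]
      nlinarith
  have h := hmono (left_mem_Icc.2 hξ.le) ⟨ht0, htξ⟩ ht0
  simp only [add_zero, sub_zero, ne_eq, mul_zero, zero_pow] at h
  nlinarith [h]

private lemma phi_upper (ξ : ℝ) (hξ : 0 < ξ) (t : ℝ) (ht0 : 0 ≤ t) (htξ : t ≤ ξ) :
    (ξ + t) ^ ((3:ℝ)/2) + (ξ - t) ^ ((3:ℝ)/2)
      ≤ 2 * ξ ^ ((3:ℝ)/2) + (3 / (2 * Real.sqrt ξ)) * t ^ 2 := by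
  set c := 3 / (2 * Real.sqrt ξ) with hc
  have hm0 : 0 < Real.sqrt ξ := Real.sqrt_pos.2 hξ
  have hanti : AntitoneOn
      (fun s => (ξ + s) ^ ((3:ℝ)/2) + (ξ - s) ^ ((3:ℝ)/2) - c * s ^ 2) (Icc 0 ξ) := by
    apply antitoneOn_of_deriv_nonpos (convex_Icc 0 ξ)
    · exact fun s _ => (hasDerivAt_phi ξ c s).continuousAt.continuousWithinAt
    · exact fun s _ => (hasDerivAt_phi ξ c s).differentiableAt.differentiableWithinAt
    · intro s hs
      rw [interior_Icc, mem_Ioo] at hs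
      rw [(hasDerivAt_phi ξ c s).deriv]
      have hsa : (ξ + s) ^ ((1:ℝ)/2) = Real.sqrt (ξ + s) := by
        rw [Real.sqrt_eq_rpow]
      have hsb : (ξ - s) ^ ((1:ℝ)/2) = Real.sqrt (ξ - s) := by
        rw [Real.sqrt_eq_rpow]
      rw [hsa, hsb, hc]
      set a := Real.sqrt (ξ + s)
      set b := Real.sqrt (ξ - s)
      set w := Real.sqrt ξ
      have ha2 : a ^ 2 = ξ + s := Real.sq_sqrt (by linarith)
      have hb2 : b ^ 2 = ξ - s := Real.sq_sqrt (by linarith)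
      have hw2 : w ^ 2 = ξ := Real.sq_sqrt (by linarith)
      have hab : b ≤ a := Real.sqrt_le_sqrt (by linarith)
      have hwa : w ≤ a := Real.sqrt_le_sqrt (by linarith)
      have hb0 : 0 ≤ b := Real.sqrt_nonneg _
      have key : w * (a - b) ≤ 2 * s := by
        nlinarith [mul_le_mul_of_nonneg_left (by linarith : w ≤ a + b) (sub_nonneg.2 hab)]
      rw [sub_nonpos, show (3:ℝ)/(2*w)*(2*s) = 3*s/w from by field_simp,
        le_div_iff₀ hm0]
      nlinarith
  have h := hanti (left_mem_Icc.2 hξ.le) ⟨ht0, htξ⟩ ht0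
  simp only [add_zero, sub_zero, ne_eq, mul_zero, zero_pow] at h
  nlinarith [h]

/-- For ω(ξ) = ξ − ξ^{3/2}, α ∈ [1,2) and 0 < ξ ≤ δ ≤ 1, the dissipative contribution
from the near part of the integral is bounded by −(3/4)ξ^{3/2−α}. -/
theorem stmt8 (α δ ξ : ℝ) (hα1 : 1 ≤ α) (hα2 : α < 2)
    (hδ0 : 0 < δ) (hδ1 : δ ≤ 1) (hξ0 : 0 < ξ) (hξδ : ξ ≤ δ) :
    (∫ η in (0:ℝ)..(ξ/2),
        (((ξ + 2*η) - (ξ + 2*η) ^ ((3:ℝ)/2)) + ((ξ - 2*η) - (ξ - 2*η) ^ ((3:ℝ)/2))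
          - 2 * (ξ - ξ ^ ((3:ℝ)/2))) / η ^ (1 + α))
      ≤ -(3/4) * ξ ^ ((3:ℝ)/2 - α) := by
  have hξ2 : (0:ℝ) ≤ ξ/2 := by linarith
  have hsq2 : 0 < Real.sqrt (2*ξ) := Real.sqrt_pos.2 (by linarith)
  have hsq : 0 < Real.sqrt ξ := Real.sqrt_pos.2 hξ0
  set f : ℝ → ℝ := fun η =>
    (((ξ + 2*η) - (ξ + 2*η) ^ ((3:ℝ)/2)) + ((ξ - 2*η) - (ξ - 2*η) ^ ((3:ℝ)/2))
      - 2 * (ξ - ξ ^ ((3:ℝ)/2))) / η ^ (1 + α) with hf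
  set g : ℝ → ℝ := fun η => -(3 / Real.sqrt (2*ξ)) * η ^ ((1:ℝ) - α) with hg
  -- pointwise bounds on (0, ξ/2]
  have hbound : ∀ η ∈ Ioc (0:ℝ) (ξ/2),
      f η ≤ g η ∧ ‖f η‖ ≤ (6 / Real.sqrt ξ) * η ^ ((1:ℝ) - α) := by
    intro η hη
    obtain ⟨hη0, hη2⟩ := hη
    have ht0 : (0:ℝ) ≤ 2*η := by linarith
    have htξ : 2*η ≤ ξ := by linarith
    have hlow := phi_lower ξ hξ0 (2*η) ht0 htξ
    have hupp := phi_upper ξ hξ0 (2*η) ht0 htξ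
    have e1 : (3 / (4 * Real.sqrt (2*ξ))) * (2*η)^2 = (3 / Real.sqrt (2*ξ)) * η^2 := by
      field_simp; ring
    have e2 : (3 / (2 * Real.sqrt ξ)) * (2*η)^2 = (6 / Real.sqrt ξ) * η^2 := by
      field_simp; ring
    set N : ℝ := ((ξ + 2*η) - (ξ + 2*η) ^ ((3:ℝ)/2)) + ((ξ - 2*η) - (ξ - 2*η) ^ ((3:ℝ)/2))
      - 2 * (ξ - ξ ^ ((3:ℝ)/2)) with hN
    have hNle : N ≤ -((3 / Real.sqrt (2*ξ)) * η^2) := by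
      rw [hN]; nlinarith [hlow]
    have hNge : -((6 / Real.sqrt ξ) * η^2) ≤ N := by
      rw [hN]; nlinarith [hupp]
    have hηp : 0 < η ^ (1+α) := Real.rpow_pos_of_pos hη0 _
    have hpow : η ^ ((1:ℝ) - α) = η ^ 2 / η ^ (1+α) := by
      rw [← Real.rpow_natCast η 2, ← Real.rpow_sub hη0]
      norm_num
      rw [show (2:ℝ) - (1+α) = 1-α by ring]
    constructor
    · show N / η ^ (1+α) ≤ -(3 / Real.sqrt (2*ξ)) * η ^ ((1:ℝ) - α)
      have h2 : -(3 / Real.sqrt (2*ξ)) * η ^ ((1:ℝ) - α)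
          = -((3 / Real.sqrt (2*ξ)) * η^2) / η ^ (1+α) := by
        rw [hpow]; ring
      rw [h2]
      exact div_le_div_of_nonneg_right hNle hηp.le
    · show ‖N / η ^ (1+α)‖ ≤ (6 / Real.sqrt ξ) * η ^ ((1:ℝ) - α)
      rw [Real.norm_eq_abs, abs_div, abs_of_pos hηp]
      have habs : |N| ≤ (6 / Real.sqrt ξ) * η^2 := by
        rw [abs_le]
        constructor
        · exact hNge
        · have : (0:ℝ) ≤ (3 / Real.sqrt (2*ξ)) * η^2 := by positivity
          linarith
      calc |N| / η ^ (1+α) ≤ ((6 / Real.sqrt ξ) * η^2) / η ^ (1+α) :=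
            div_le_div_of_nonneg_right habs hηp.le
        _ = (6 / Real.sqrt ξ) * η ^ ((1:ℝ) - α) := by rw [hpow]; ring
  -- integrability
  have hrpow_int : IntervalIntegrable (fun η : ℝ => η ^ ((1:ℝ) - α)) volume 0 (ξ/2) :=
    intervalIntegral.intervalIntegrable_rpow' (by linarith)
  have hgint : IntervalIntegrable g volume 0 (ξ/2) := by
    rw [hg]; exact hrpow_int.const_mul _
  have hGint : IntegrableOn (fun η : ℝ => (6 / Real.sqrt ξ) * η ^ ((1:ℝ) - α))
      (Ioc 0 (ξ/2)) volume := by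
    have := hrpow_int.const_mul (6 / Real.sqrt ξ)
    rwa [intervalIntegrable_iff_integrableOn_Ioc_of_le hξ2] at this
  have hfmeas : AEStronglyMeasurable f (volume.restrict (Ioc 0 (ξ/2))) := by
    apply ContinuousOn.aestronglyMeasurable _ measurableSet_Ioc
    apply ContinuousOn.div
    · apply Continuous.continuousOn
      have c1 : Continuous (fun η : ℝ => (ξ + 2*η) ^ ((3:ℝ)/2)) :=
        (continuous_const.add (continuous_const.mul continuous_id)).rpow_const
          (fun x => Or.inr (by norm_num))
      have c2 : Continuous (fun η : ℝ => (ξ - 2*η) ^ ((3:ℝ)/2)) :=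
        (continuous_const.sub (continuous_const.mul continuous_id)).rpow_const
          (fun x => Or.inr (by norm_num))
      exact (((continuous_const.add (continuous_const.mul continuous_id)).sub c1).add
        ((continuous_const.sub (continuous_const.mul continuous_id)).sub c2)).sub
        continuous_const
    · exact continuousOn_id.rpow_const (fun x hx => Or.inl hx.1.ne')
    · exact fun η hη => (Real.rpow_pos_of_pos hη.1 _).ne'
  have hfint : IntervalIntegrable f volume 0 (ξ/2) := by
    rw [intervalIntegrable_iff_integrableOn_Ioc_of_le hξ2]
    apply Integrable.mono' hGint hfmeas
    filter_upwards [ae_restrict_mem measurableSet_Ioc] with η hη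
    exact (hbound η hη).2
  -- comparison
  have hcomp : (∫ η in (0:ℝ)..(ξ/2), f η) ≤ ∫ η in (0:ℝ)..(ξ/2), g η := by
    apply intervalIntegral.integral_mono_ae_restrict hξ2 hfint hgint
    have h0 : ∀ᵐ x : ℝ, x ≠ 0 := by
      rw [ae_iff]
      simpa using Real.volume_singleton (a := 0)
    filter_upwards [ae_restrict_mem measurableSet_Icc, ae_restrict_of_ae h0] with x hx hx0
    exact (hbound x ⟨lt_of_le_of_ne hx.1 (Ne.symm hx0), hx.2⟩).1
  -- compute ∫ g
  have hInt : (∫ η in (0:ℝ)..(ξ/2), g η)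
      = -(3 / Real.sqrt (2*ξ)) * ((ξ/2) ^ ((2:ℝ) - α) / (2 - α)) := by
    rw [hg]
    rw [intervalIntegral.integral_const_mul]
    rw [integral_rpow (Or.inl (by linarith : (-1:ℝ) < 1 - α))]
    rw [Real.zero_rpow (by intro h; rw [show (1:ℝ)-α+1 = 2-α by ring] at h; linarith)]
    rw [show (1:ℝ)-α+1 = 2-α by ring]
    ring
  -- final arithmetic
  have hA2 : Real.sqrt 2 ^ 2 = 2 := Real.sq_sqrt (by norm_num)
  have hA0 : (0:ℝ) < Real.sqrt 2 := Real.sqrt_pos.2 (by norm_num)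
  have hB0 : (0:ℝ) < (2:ℝ) ^ ((2:ℝ) - α) := Real.rpow_pos_of_pos (by norm_num) _
  have hBle : (2:ℝ) ^ ((2:ℝ) - α) ≤ 2 := by
    calc (2:ℝ) ^ ((2:ℝ) - α) ≤ (2:ℝ) ^ (1:ℝ) :=
          Real.rpow_le_rpow_of_exponent_le (by norm_num) (by linarith)
      _ = 2 := Real.rpow_one 2
  have hC0 : (0:ℝ) < 2 - α := by linarith
  have hC1 : 2 - α ≤ 1 := by linarith
  have hAle : Real.sqrt 2 ≤ 17/12 := by nlinarith [hA2, hA0]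
  have key : Real.sqrt 2 * (2:ℝ) ^ ((2:ℝ) - α) * (2 - α) ≤ 4 := by
    have h1 : Real.sqrt 2 * (2:ℝ) ^ ((2:ℝ) - α) ≤ (17/12) * 2 :=
      mul_le_mul hAle hBle hB0.le (by norm_num)
    have h2 := mul_le_mul h1 hC1 hC0.le (by norm_num : (0:ℝ) ≤ (17:ℝ)/12 * 2)
    linarith
  have hsplit : (ξ/2) ^ ((2:ℝ) - α) = ξ ^ ((2:ℝ) - α) / (2:ℝ) ^ ((2:ℝ) - α) :=
    Real.div_rpow hξ0.le (by norm_num) _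
  have hξsplit : ξ ^ ((2:ℝ) - α) = ξ ^ ((3:ℝ)/2 - α) * Real.sqrt ξ := by
    rw [Real.sqrt_eq_rpow, ← Real.rpow_add hξ0, show (3:ℝ)/2 - α + 1/2 = 2 - α by ring]
  have hsqrt2ξ : Real.sqrt (2*ξ) = Real.sqrt 2 * Real.sqrt ξ := Real.sqrt_mul (by norm_num) ξ
  have hP0 : (0:ℝ) < ξ ^ ((3:ℝ)/2 - α) := Real.rpow_pos_of_pos hξ0 _
  have hfinal : -(3 / Real.sqrt (2*ξ)) * ((ξ/2) ^ ((2:ℝ) - α) / (2 - α))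
      ≤ -(3/4) * ξ ^ ((3:ℝ)/2 - α) := by
    rw [hsqrt2ξ, hsplit, hξsplit]
    set A := Real.sqrt 2
    set S := Real.sqrt ξ
    set B := (2:ℝ) ^ ((2:ℝ) - α)
    set P := ξ ^ ((3:ℝ)/2 - α)
    have hrw : -(3 / (A * S)) * (P * S / B / (2 - α)) = -(3 * P / (A * B * (2 - α))) := by
      field_simp
    rw [hrw, show -(3/4) * P = -(3*P/4) by ring, neg_le_neg_iff,
      div_le_div_iff₀ (by norm_num) (by positivity)]
    nlinarith [mul_le_mul_of_nonneg_left key (by positivity : (0:ℝ) ≤ 3*P)]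
  calc (∫ η in (0:ℝ)..(ξ/2), f η) ≤ ∫ η in (0:ℝ)..(ξ/2), g η := hcomp
    _ = -(3 / Real.sqrt (2*ξ)) * ((ξ/2) ^ ((2:ℝ) - α) / (2 - α)) := hInt
    _ ≤ -(3/4) * ξ ^ ((3:ℝ)/2 - α) := hfinal
end

section
/- Define ω : [0,∞) → [0,∞) by ω(ξ) = ξ − ξ^{3/2} for ξ ∈ [0,δ] and ω'(ξ) = γ/(ξ(4 + log(ξ/δ))) for ξ > δ (with ω continuous at δ), where 0 < γ < δ < 1. Then: (a) ω is unbounded, i.e. ω(ξ) → ∞ as ξ → ∞; (b) if δ is small enough and γ ≤ δ, then ω'(δ−) = 1 − (3/2)δ^{1/2} > 1/4 ≥ γ/(4δ) = ω'(δ+), so ω' is (weakly) decreasing across δ and ω is concave on [0,∞). -/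
open Filter Set

/-- The modulus of continuity MOC₁ of the critical case α = 1. -/
noncomputable def moc1 (δ γ : ℝ) : ℝ → ℝ := fun ξ =>
  if ξ ≤ δ then ξ - ξ ^ ((3:ℝ)/2)
  else (δ - δ ^ ((3:ℝ)/2)) + ∫ η in δ..ξ, γ / (η * (4 + Real.log (η / δ)))

/-- Upper concave envelope piece: the first branch extended by its tangent line at `δ`. -/
noncomputable def Fln (δ : ℝ) : ℝ → ℝ := fun x =>
  if x ≤ δ then x - x ^ ((3:ℝ)/2)
  else (δ - δ ^ ((3:ℝ)/2)) + (1 - 3/2 * Real.sqrt δ) * (x - δ)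

/-- Upper concave envelope piece: the second branch extended by its tangent line at `δ`. -/
noncomputable def Gln (δ γ : ℝ) : ℝ → ℝ := fun x =>
  if x ≤ δ then (δ - δ ^ ((3:ℝ)/2)) + γ / (4 * δ) * (x - δ)
  else (δ - δ ^ ((3:ℝ)/2)) + (γ * Real.log (4 + Real.log (x / δ)) - γ * Real.log 4)

lemma hasDerivAt_base {x : ℝ} (hx : 0 < x) :
    HasDerivAt (fun y : ℝ => y - y ^ ((3:ℝ)/2)) (1 - 3/2 * Real.sqrt x) x := by
  have h := (Real.hasDerivAt_rpow_const (p := (3:ℝ)/2) (Or.inl hx.ne'))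
  have h2 := (hasDerivAt_id x).sub h
  refine h2.congr_deriv ?_
  rw [Real.sqrt_eq_rpow]
  norm_num

lemma hasDerivAt_line (c s a : ℝ) (x : ℝ) :
    HasDerivAt (fun y : ℝ => c + s * (y - a)) s x := by
  have h := (((hasDerivAt_id x).sub_const a).const_mul s).const_add c
  simpa using h

lemma hasDerivAt_Fln (δ : ℝ) (hδ : 0 < δ) {x : ℝ} (hx : 0 < x) :
    HasDerivAt (Fln δ) (1 - 3/2 * Real.sqrt (min x δ)) x := by
  rcases lt_trichotomy x δ with h | rfl | h
  · rw [min_eq_left h.le]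
    apply (hasDerivAt_base hx).congr_of_eventuallyEq
    filter_upwards [Iio_mem_nhds h] with y hy
    simp only [Fln, if_pos (le_of_lt (mem_Iio.1 hy))]
  · rw [min_self]
    have hL : HasDerivWithinAt (Fln x) (1 - 3/2 * Real.sqrt x) (Iic x) x := by
      apply ((hasDerivAt_base hx).hasDerivWithinAt).congr
      · intro y hy; simp only [Fln, if_pos (mem_Iic.1 hy)]
      · simp only [Fln, if_pos le_rfl]
    have hR : HasDerivWithinAt (Fln x) (1 - 3/2 * Real.sqrt x) (Ici x) x := by
      apply ((hasDerivAt_line (x - x ^ ((3:ℝ)/2)) (1 - 3/2 * Real.sqrt x) x x).hasDerivWithinAt).congr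
      · intro y hy
        rcases eq_or_lt_of_le (mem_Ici.1 hy) with rfl | hlt
        · simp [Fln]
        · simp only [Fln, if_neg (not_le.2 hlt)]
      · simp [Fln]
    have := hL.union hR
    rwa [Iic_union_Ici, hasDerivWithinAt_univ] at this
  · rw [min_eq_right h.le]
    apply ((hasDerivAt_line (δ - δ ^ ((3:ℝ)/2)) (1 - 3/2 * Real.sqrt δ) δ x)).congr_of_eventuallyEq
    filter_upwards [Ioi_mem_nhds h] with y hy
    simp only [Fln, if_neg (not_le.2 (mem_Ioi.1 hy))]

lemma hasDerivAt_L0 (δ γ : ℝ) (hδ : 0 < δ) {x : ℝ} (hx : δ ≤ x) :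
    HasDerivAt (fun η => γ * Real.log (4 + Real.log (η / δ)))
      (γ / (x * (4 + Real.log (x / δ)))) x := by
  have hx0 : 0 < x := hδ.trans_le hx
  have hq : (0:ℝ) < x / δ := div_pos hx0 hδ
  have hlog : 0 ≤ Real.log (x / δ) := Real.log_nonneg ((one_le_div hδ).2 hx)
  have hd : (0:ℝ) < 4 + Real.log (x / δ) := by linarith
  have h1 : HasDerivAt (fun η : ℝ => η / δ) (1 / δ) x := (hasDerivAt_id x).div_const δ
  have h2 : HasDerivAt (fun η : ℝ => Real.log (η / δ)) ((x / δ)⁻¹ * (1 / δ)) x :=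
    by have := (Real.hasDerivAt_log hq.ne').comp x h1; exact this
  have h3 : HasDerivAt (fun η : ℝ => 4 + Real.log (η / δ)) ((x / δ)⁻¹ * (1 / δ)) x :=
    h2.const_add 4
  have h4 : HasDerivAt (fun η : ℝ => Real.log (4 + Real.log (η / δ)))
      ((4 + Real.log (x / δ))⁻¹ * ((x / δ)⁻¹ * (1 / δ))) x :=
    by have := (Real.hasDerivAt_log hd.ne').comp x h3; exact this
  have h5 := h4.const_mul γ
  refine h5.congr_deriv ?_
  field_simp

lemma hasDerivAt_L (δ γ : ℝ) (hδ : 0 < δ) {x : ℝ} (hx : δ ≤ x) :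
    HasDerivAt (fun η => (δ - δ ^ ((3:ℝ)/2)) + (γ * Real.log (4 + Real.log (η / δ)) - γ * Real.log 4))
      (γ / (x * (4 + Real.log (x / δ)))) x :=
  (((hasDerivAt_L0 δ γ hδ hx).sub_const (γ * Real.log 4)).const_add (δ - δ ^ ((3:ℝ)/2)))

lemma hasDerivAt_Gln (δ γ : ℝ) (hδ : 0 < δ) {x : ℝ} (hx : 0 < x) :
    HasDerivAt (Gln δ γ) (γ / (max x δ * (4 + Real.log (max x δ / δ)))) x := by
  rcases lt_trichotomy x δ with h | rfl | h
  · rw [max_eq_right h.le, div_self hδ.ne', Real.log_one, add_zero, mul_comm δ 4]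
    apply (hasDerivAt_line (δ - δ ^ ((3:ℝ)/2)) (γ / (4 * δ)) δ x).congr_of_eventuallyEq
    filter_upwards [Iio_mem_nhds h] with y hy
    simp only [Gln, if_pos (le_of_lt (mem_Iio.1 hy))]
  · rw [max_self, div_self hδ.ne', Real.log_one, add_zero]
    have hL : HasDerivWithinAt (Gln x γ) (γ / (x * 4)) (Iic x) x := by
      have h44 : γ / (x * 4) = γ / (4 * x) := by rw [mul_comm]
      rw [h44]
      apply ((hasDerivAt_line (x - x ^ ((3:ℝ)/2)) (γ / (4 * x)) x x).hasDerivWithinAt).congr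
      · intro y hy; simp only [Gln, if_pos (mem_Iic.1 hy)]
      · simp [Gln]
    have hR : HasDerivWithinAt (Gln x γ) (γ / (x * 4)) (Ici x) x := by
      have h0 := (hasDerivAt_L x γ hδ le_rfl).hasDerivWithinAt (s := Ici x)
      rw [div_self hδ.ne', Real.log_one, add_zero] at h0
      apply h0.congr
      · intro y hy
        rcases eq_or_lt_of_le (mem_Ici.1 hy) with rfl | hlt
        · simp [Gln, div_self hδ.ne']
        · simp only [Gln, if_neg (not_le.2 hlt)]
      · simp [Gln, div_self hδ.ne']
    have := hL.union hR
    rwa [Iic_union_Ici, hasDerivWithinAt_univ] at this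
  · rw [max_eq_left h.le]
    apply (hasDerivAt_L δ γ hδ h.le).congr_of_eventuallyEq
    filter_upwards [Ioi_mem_nhds h] with y hy
    simp only [Gln, if_neg (not_le.2 (mem_Ioi.1 hy))]

lemma ftc (δ γ : ℝ) (hδ : 0 < δ) {ξ : ℝ} (hξ : δ ≤ ξ) :
    ∫ η in δ..ξ, γ / (η * (4 + Real.log (η / δ))) =
      γ * Real.log (4 + Real.log (ξ / δ)) - γ * Real.log 4 := by
  have key : ∫ η in δ..ξ, γ / (η * (4 + Real.log (η / δ))) =
      γ * Real.log (4 + Real.log (ξ / δ)) - γ * Real.log (4 + Real.log (δ / δ)) := by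
    apply intervalIntegral.integral_eq_sub_of_hasDerivAt
    · intro η hη
      rw [uIcc_of_le hξ] at hη
      exact hasDerivAt_L0 δ γ hδ hη.1
    · apply ContinuousOn.intervalIntegrable
      rw [uIcc_of_le hξ]
      apply ContinuousOn.div continuousOn_const
      · apply continuousOn_id.mul
        apply continuousOn_const.add
        apply Real.continuousOn_log.comp (continuousOn_id.div_const δ)
        intro η hη
        simp only [mem_compl_iff, mem_singleton_iff, id]
        exact (div_pos (hδ.trans_le hη.1) hδ).ne'
      · intro η hη
        have h1 : 0 < η := hδ.trans_le hη.1
        have h2 : 0 ≤ Real.log (η / δ) := Real.log_nonneg ((one_le_div hδ).2 hη.1)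
        positivity
  rw [key, div_self hδ.ne', Real.log_one, add_zero]

lemma concaveOn_congr' {s : Set ℝ} {f g : ℝ → ℝ} (h : ConcaveOn ℝ s f) (he : EqOn f g s) :
    ConcaveOn ℝ s g :=
  ⟨h.1, fun x hx y hy a b ha hb hab => by
    rw [← he hx, ← he hy, ← he (h.1 hx hy ha hb hab)]
    exact h.2 hx hy ha hb hab⟩

lemma continuousOn_Fln (δ : ℝ) (hδ : 0 < δ) : ContinuousOn (Fln δ) (Set.Ici 0) := by
  intro x hx
  rcases eq_or_lt_of_le (mem_Ici.1 hx) with rfl | hx0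
  · have hc : ContinuousAt (fun y : ℝ => y - y ^ ((3:ℝ)/2)) 0 :=
      continuousAt_id.sub (Real.continuousAt_rpow_const 0 _ (Or.inr (by norm_num)))
    have heq : Fln δ =ᶠ[nhds (0:ℝ)] fun y : ℝ => y - y ^ ((3:ℝ)/2) := by
      filter_upwards [Iio_mem_nhds hδ] with y hy
      simp only [Fln, if_pos (le_of_lt (mem_Iio.1 hy))]
    exact (hc.congr heq.symm).continuousWithinAt
  · exact (hasDerivAt_Fln δ hδ hx0).continuousAt.continuousWithinAt

lemma continuousOn_Gln (δ γ : ℝ) (hδ : 0 < δ) : ContinuousOn (Gln δ γ) (Set.Ici 0) := by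
  intro x hx
  rcases eq_or_lt_of_le (mem_Ici.1 hx) with rfl | hx0
  · have hc : ContinuousAt (fun y : ℝ => (δ - δ ^ ((3:ℝ)/2)) + γ / (4 * δ) * (y - δ)) 0 := by
      fun_prop
    have heq : Gln δ γ =ᶠ[nhds (0:ℝ)]
        fun y : ℝ => (δ - δ ^ ((3:ℝ)/2)) + γ / (4 * δ) * (y - δ) := by
      filter_upwards [Iio_mem_nhds hδ] with y hy
      simp only [Gln, if_pos (le_of_lt (mem_Iio.1 hy))]
    exact (hc.congr heq.symm).continuousWithinAt
  · exact (hasDerivAt_Gln δ γ hδ hx0).continuousAt.continuousWithinAt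

lemma concaveOn_Fln (δ : ℝ) (hδ : 0 < δ) : ConcaveOn ℝ (Set.Ici 0) (Fln δ) := by
  apply AntitoneOn.concaveOn_of_deriv (convex_Ici 0) (continuousOn_Fln δ hδ)
  · rw [interior_Ici]
    intro x hx
    exact (hasDerivAt_Fln δ hδ hx).differentiableAt.differentiableWithinAt
  · rw [interior_Ici]
    intro x hx y hy hxy
    rw [(hasDerivAt_Fln δ hδ hx).deriv, (hasDerivAt_Fln δ hδ hy).deriv]
    have : Real.sqrt (min x δ) ≤ Real.sqrt (min y δ) :=
      Real.sqrt_le_sqrt (min_le_min hxy le_rfl)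
    linarith

lemma concaveOn_Gln (δ γ : ℝ) (hδ : 0 < δ) (hγ : 0 ≤ γ) :
    ConcaveOn ℝ (Set.Ici 0) (Gln δ γ) := by
  apply AntitoneOn.concaveOn_of_deriv (convex_Ici 0) (continuousOn_Gln δ γ hδ)
  · rw [interior_Ici]
    intro x hx
    exact (hasDerivAt_Gln δ γ hδ hx).differentiableAt.differentiableWithinAt
  · rw [interior_Ici]
    intro x hx y hy hxy
    rw [(hasDerivAt_Gln δ γ hδ hx).deriv, (hasDerivAt_Gln δ γ hδ hy).deriv]
    have hmx : 0 < max x δ := lt_max_of_lt_right hδ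
    have hmxy : max x δ ≤ max y δ := max_le_max hxy le_rfl
    have hlx : 0 ≤ Real.log (max x δ / δ) :=
      Real.log_nonneg ((one_le_div hδ).2 (le_max_right _ _))
    have hll : Real.log (max x δ / δ) ≤ Real.log (max y δ / δ) := by
      have hdd : max x δ / δ ≤ max y δ / δ := by gcongr
      exact Real.log_le_log (div_pos hmx hδ) hdd
    have hmy : 0 < max y δ := lt_max_of_lt_right hδ
    have hly : 0 ≤ Real.log (max y δ / δ) :=
      Real.log_nonneg ((one_le_div hδ).2 (le_max_right _ _))
    apply div_le_div_of_nonneg_left hγ (by positivity)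
    exact mul_le_mul hmxy (by linarith) (by linarith) hmy.le


lemma sqrt_lt_half {δ : ℝ} (hδ0 : 0 < δ) (hδ : δ < 1 / 4) : Real.sqrt δ < 1 / 2 := by
  rw [show (1:ℝ)/2 = Real.sqrt (1/4) by
    rw [show (1:ℝ)/4 = (1/2)^2 by norm_num, Real.sqrt_sq (by norm_num)]]
  exact Real.sqrt_lt_sqrt hδ0.le hδ

lemma Fln_le_Gln (δ γ : ℝ) (hγ0 : 0 < γ) (hγδ : γ ≤ δ) (hδ : δ < 1 / 4) {x : ℝ}
    (hx0 : 0 ≤ x) (hxδ : x ≤ δ) : Fln δ x ≤ Gln δ γ x := by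
  have hδ0 : 0 < δ := hγ0.trans_le hγδ
  have hsq : Real.sqrt δ < 1 / 2 := sqrt_lt_half hδ0 hδ
  have hC : γ / (4 * δ) ≤ 1 / 4 := by
    rw [div_le_iff₀ (by linarith)]; linarith
  have key := (convex_Icc 0 δ).mul_sub_le_image_sub_of_le_deriv
    (f := Fln δ) (C := γ / (4 * δ))
    ((continuousOn_Fln δ hδ0).mono Icc_subset_Ici_self)
    (fun z hz => by
      rw [interior_Icc] at hz
      exact (hasDerivAt_Fln δ hδ0 hz.1).differentiableAt.differentiableWithinAt)
    (fun z hz => by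
      rw [interior_Icc] at hz
      rw [(hasDerivAt_Fln δ hδ0 hz.1).deriv, min_eq_left hz.2.le]
      have h1 : Real.sqrt z ≤ Real.sqrt δ := Real.sqrt_le_sqrt hz.2.le
      linarith)
    x ⟨hx0, hxδ⟩ δ ⟨hδ0.le, le_rfl⟩ hxδ
  have hFδ : Fln δ δ = δ - δ ^ ((3:ℝ)/2) := by simp [Fln]
  have hG : Gln δ γ x = (δ - δ ^ ((3:ℝ)/2)) + γ / (4 * δ) * (x - δ) := by
    simp only [Gln, if_pos hxδ]
  rw [hFδ] at key
  rw [hG]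
  nlinarith [key]

lemma Gln_le_Fln (δ γ : ℝ) (hγ0 : 0 < γ) (hγδ : γ ≤ δ) (hδ : δ < 1 / 4) {x : ℝ}
    (hxδ : δ ≤ x) : Gln δ γ x ≤ Fln δ x := by
  have hδ0 : 0 < δ := hγ0.trans_le hγδ
  have hsq : Real.sqrt δ < 1 / 2 := sqrt_lt_half hδ0 hδ
  have hC : γ / (4 * δ) ≤ 1 / 4 := by
    rw [div_le_iff₀ (by linarith)]; linarith
  rcases eq_or_lt_of_le hxδ with rfl | hlt
  · simp [Fln, Gln, le_refl]
  have key := (convex_Icc δ x).image_sub_le_mul_sub_of_deriv_le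
    (f := Gln δ γ) (C := 1 - 3/2 * Real.sqrt δ)
    ((continuousOn_Gln δ γ hδ0).mono (Icc_subset_Ici_self.trans (Ici_subset_Ici.2 hδ0.le)))
    (fun z hz => by
      rw [interior_Icc] at hz
      exact (hasDerivAt_Gln δ γ hδ0 (hδ0.trans hz.1)).differentiableAt.differentiableWithinAt)
    (fun z hz => by
      rw [interior_Icc] at hz
      rw [(hasDerivAt_Gln δ γ hδ0 (hδ0.trans hz.1)).deriv, max_eq_left hz.1.le]
      have hz0 : 0 < z := hδ0.trans hz.1
      have hl0 : 0 ≤ Real.log (z / δ) := Real.log_nonneg ((one_le_div hδ0).2 hz.1.le)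
      have hden : δ * 4 ≤ z * (4 + Real.log (z / δ)) :=
        mul_le_mul hz.1.le (by linarith) (by linarith) hz0.le
      have h1 : γ / (z * (4 + Real.log (z / δ))) ≤ γ / (δ * 4) :=
        div_le_div_of_nonneg_left hγ0.le (by positivity) hden
      have h2 : γ / (δ * 4) = γ / (4 * δ) := by rw [mul_comm]
      linarith [h1, h2 ▸ h1])
    δ ⟨le_rfl, hxδ⟩ x ⟨hxδ, le_rfl⟩ hxδ
  have hGδ : Gln δ γ δ = δ - δ ^ ((3:ℝ)/2) := by simp [Gln]
  have hF : Fln δ x = (δ - δ ^ ((3:ℝ)/2)) + (1 - 3/2 * Real.sqrt δ) * (x - δ) := by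
    simp only [Fln, if_neg (not_le.2 hlt)]
  rw [hGδ] at key
  rw [hF]
  nlinarith [key]

lemma moc1_eqOn (δ γ : ℝ) (hγ0 : 0 < γ) (hγδ : γ ≤ δ) (hδ : δ < 1 / 4) :
    EqOn (Fln δ ⊓ Gln δ γ) (moc1 δ γ) (Set.Ici 0) := by
  have hδ0 : 0 < δ := hγ0.trans_le hγδ
  intro x hx
  by_cases hxδ : x ≤ δ
  · have h1 : (Fln δ ⊓ Gln δ γ) x = Fln δ x := by
      rw [Pi.inf_apply]
      exact inf_eq_left.2 (Fln_le_Gln δ γ hγ0 hγδ hδ (mem_Ici.1 hx) hxδ)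
    rw [h1]
    simp only [moc1, Fln, if_pos hxδ]
  · have hlt : δ < x := not_le.1 hxδ
    have h1 : (Fln δ ⊓ Gln δ γ) x = Gln δ γ x := by
      rw [Pi.inf_apply]
      exact inf_eq_right.2 (Gln_le_Fln δ γ hγ0 hγδ hδ hlt.le)
    rw [h1]
    simp only [moc1, Gln, if_neg hxδ, ftc δ γ hδ0 hlt.le]

/-- MOC₁ is unbounded, its one-sided slopes match across δ (ω'(δ−) > 1/4 ≥ ω'(δ+)),
and it is concave on [0,∞), provided 0 < γ ≤ δ < 1/4. -/
theorem stmt15 (δ γ : ℝ) (hγ0 : 0 < γ) (hγδ : γ ≤ δ) (hδ : δ < 1 / 4) :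
    Tendsto (moc1 δ γ) atTop atTop ∧
    (1 / 4 < 1 - (3 / 2) * Real.sqrt δ) ∧
    (γ / (4 * δ) ≤ 1 / 4) ∧
    ConcaveOn ℝ (Set.Ici 0) (moc1 δ γ) := by
  have hδ0 : 0 < δ := hγ0.trans_le hγδ
  have hsq : Real.sqrt δ < 1 / 2 := sqrt_lt_half hδ0 hδ
  refine ⟨?_, by linarith, ?_, ?_⟩
  · -- unboundedness
    have heq : (fun ξ => (δ - δ ^ ((3:ℝ)/2)) +
        (γ * Real.log (4 + Real.log (ξ / δ)) - γ * Real.log 4)) =ᶠ[atTop] moc1 δ γ := by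
      filter_upwards [eventually_gt_atTop δ] with ξ hξ
      simp only [moc1, if_neg (not_le.2 hξ), ftc δ γ hδ0 hξ.le]
    apply Tendsto.congr' heq
    have t1 : Tendsto (fun ξ : ℝ => ξ / δ) atTop atTop :=
      tendsto_id.atTop_div_const hδ0
    have t2 : Tendsto (fun ξ : ℝ => 4 + Real.log (ξ / δ)) atTop atTop :=
      tendsto_atTop_add_const_left _ 4 (Real.tendsto_log_atTop.comp t1)
    have t3 : Tendsto (fun ξ : ℝ => γ * Real.log (4 + Real.log (ξ / δ))) atTop atTop :=
      (Real.tendsto_log_atTop.comp t2).const_mul_atTop hγ0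
    have t4 : Tendsto (fun ξ : ℝ => γ * Real.log (4 + Real.log (ξ / δ)) - γ * Real.log 4)
        atTop atTop := tendsto_atTop_add_const_right _ (-(γ * Real.log 4)) t3
    exact tendsto_atTop_add_const_left _ _ t4
  · rw [div_le_iff₀ (by linarith)]; linarith
  · exact concaveOn_congr'
      ((concaveOn_Fln δ hδ0).inf (concaveOn_Gln δ γ hδ0 hγ0.le))
      (moc1_eqOn δ γ hγ0 hγδ hδ)
end

section
/- Let δ ∈ (0,1), γ ∈ (0,δ), and let ω be the modulus of MOC₁: ω(ξ) = ξ − ξ^{3/2} on [0,δ], ω'(ξ) = γ/(ξ(4+log(ξ/δ))) for ξ > δ. Then ∫_δ^∞ ω(η)/η² dη ≤ ω(δ)/δ + γ/(4δ); in particular if γ ≤ δ and δ ≤ 1, then ∫_δ^∞ ω(η)/η² dη ≤ 2. -/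
open MeasureTheory Set

/-- Tail bound ∫_δ^∞ ω(η)/η² dη ≤ ω(δ)/δ + γ/(4δ) ≤ 2 for the critical modulus MOC₁. -/
theorem stmt16 (δ γ : ℝ) (hδ1 : δ < 1) (hγ0 : 0 < γ) (hγδ : γ < δ) :
    ((∫ η in Set.Ioi δ, moc1 δ γ η / η ^ 2) ≤ (δ - δ ^ ((3:ℝ)/2)) / δ + γ / (4 * δ)) ∧
    ((∫ η in Set.Ioi δ, moc1 δ γ η / η ^ 2) ≤ 2) := by
  have hδ0 : 0 < δ := hγ0.trans hγδ
  set C : ℝ := δ - δ ^ ((3:ℝ)/2) with hCdef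
  set K : ℝ := γ / 4 with hKdef
  have hK0 : 0 < K := by positivity
  have hC0 : 0 ≤ C := by
    have : δ ^ ((3:ℝ)/2) ≤ δ ^ (1:ℝ) :=
      Real.rpow_le_rpow_of_exponent_ge hδ0 hδ1.le (by norm_num)
    rw [Real.rpow_one] at this
    simp [hCdef]; linarith
  have hCδ : C ≤ δ := by
    have : 0 ≤ δ ^ ((3:ℝ)/2) := Real.rpow_nonneg hδ0.le _
    simp [hCdef]; linarith
  set h : ℝ → ℝ := fun t => γ / (t * (4 + Real.log (t / δ))) with hhdef
  -- basic facts about the denominator on `Ici δ`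
  have hlog : ∀ t, δ ≤ t → 0 ≤ Real.log (t / δ) := by
    intro t ht
    exact Real.log_nonneg ((one_le_div hδ0).2 ht)
  have hden : ∀ t, δ ≤ t → 0 < t * (4 + Real.log (t / δ)) := by
    intro t ht
    have := hlog t ht
    have ht0 : 0 < t := hδ0.trans_le ht
    nlinarith
  have hh_nonneg : ∀ t, δ ≤ t → 0 ≤ h t := fun t ht => le_of_lt (by
    exact div_pos hγ0 (hden t ht))
  -- continuity of h on Ici δ
  have hhcont : ContinuousOn h (Ici δ) := by
    apply ContinuousOn.div continuousOn_const
    · apply ContinuousOn.mul continuousOn_id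
      apply ContinuousOn.add continuousOn_const
      apply ContinuousOn.log
      · exact continuousOn_id.div_const δ
      · intro t ht
        have : 0 < t := hδ0.trans_le ht
        positivity
    · intro t ht
      exact (hden t ht).ne'
  have hint : ∀ b, δ ≤ b → IntervalIntegrable h volume δ b := by
    intro b hb
    apply ContinuousOn.intervalIntegrable
    apply hhcont.mono
    rw [uIcc_of_le hb]
    exact Icc_subset_Ici_self
  -- value of moc1 on Ioi δ
  have hmoc : ∀ η, δ < η → moc1 δ γ η = C + ∫ t in δ..η, h t := by
    intro η hη
    simp [moc1, not_le.2 hη, hCdef, hhdef]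
  -- nonnegativity of moc1 on Ioi δ
  have hmoc_nonneg : ∀ η, δ < η → 0 ≤ moc1 δ γ η := by
    intro η hη
    rw [hmoc η hη]
    have : 0 ≤ ∫ t in δ..η, h t := by
      apply intervalIntegral.integral_nonneg hη.le
      intro t ht
      exact hh_nonneg t ht.1
    linarith
  -- pointwise upper bound for moc1 on Ioi δ
  have hmoc_le : ∀ η, δ < η → moc1 δ γ η ≤ C + K * Real.log (η / δ) := by
    intro η hη
    rw [hmoc η hη]
    have h1 : (∫ t in δ..η, h t) ≤ ∫ t in δ..η, K * (1 / t) := by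
      apply intervalIntegral.integral_mono_on hη.le (hint η hη.le)
      · apply ContinuousOn.intervalIntegrable
        apply ContinuousOn.mul continuousOn_const
        apply ContinuousOn.div continuousOn_const continuousOn_id
        intro t ht
        rw [uIcc_of_le hη.le] at ht
        exact (hδ0.trans_le ht.1).ne'
      · intro t ht
        have ht0 : 0 < t := hδ0.trans_le ht.1
        have hl := hlog t ht.1
        rw [hhdef, hKdef]
        rw [div_le_iff₀ (hden t ht.1)]
        have : γ / 4 * (1 / t) * (t * (4 + Real.log (t / δ))) =
            γ * (1 + t⁻¹ * t * Real.log (t / δ) / 4) := by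
          field_simp
        rw [this, inv_mul_cancel₀ ht0.ne']
        nlinarith
    have h2 : (∫ t in δ..η, K * (1 / t)) = K * Real.log (η / δ) := by
      rw [intervalIntegral.integral_const_mul, integral_one_div]
      rw [uIcc_of_le hη.le]
      intro hmem
      exact absurd hmem.1 (not_le.2 hδ0)
    linarith [h1.trans_eq h2]
  -- the comparison function g and its antiderivative F
  set g : ℝ → ℝ := fun η => (C + K * Real.log (η / δ)) / η ^ 2 with hgdef
  set F : ℝ → ℝ := fun η => -((C + K * Real.log (η / δ)) + K) / η with hFdef
  have hFderiv : ∀ η ∈ Ici δ, HasDerivAt F (g η) η := by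
    intro η hη
    have hη0 : 0 < η := hδ0.trans_le hη
    have hlogd : HasDerivAt (fun x : ℝ => Real.log (x / δ)) η⁻¹ η := by
      have h1 : HasDerivAt (fun x : ℝ => x / δ) (1 / δ) η := (hasDerivAt_id η).div_const δ
      have h2 := (Real.hasDerivAt_log (by positivity : η / δ ≠ 0)).comp η h1
      refine h2.congr_deriv ?_
      field_simp
    have hN : HasDerivAt (fun x => -((C + K * Real.log (x / δ)) + K)) (-(K * η⁻¹)) η := by
      have := (((hasDerivAt_const η C).add (hlogd.const_mul K)).add (hasDerivAt_const η K)).neg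
      refine this.congr_deriv ?_
      simp
    have := hN.div (hasDerivAt_id η) hη0.ne'
    rw [show F = (fun x => -(C + K * Real.log (x / δ) + K)) / id from rfl]
    refine this.congr_deriv ?_
    rw [hgdef]
    simp only [id]
    field_simp
    ring
  have hg_nonneg : ∀ η ∈ Ioi δ, 0 ≤ g η := by
    intro η hη
    have := hlog η (le_of_lt hη)
    have hη0 : 0 < η := hδ0.trans hη
    rw [hgdef]
    positivity
  have hFtendsto : Filter.Tendsto F Filter.atTop (nhds 0) := by
    have heq : ∀ᶠ η in Filter.atTop, (-(C + K - K * Real.log δ)) * η⁻¹ + (-K) * (Real.log η / η) = F η := by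
      filter_upwards [Filter.eventually_gt_atTop 0] with η hη
      rw [hFdef]
      simp only
      rw [Real.log_div hη.ne' hδ0.ne']
      field_simp
      ring
    apply Filter.Tendsto.congr' heq
    have h1 : Filter.Tendsto (fun η : ℝ => η⁻¹) Filter.atTop (nhds 0) := tendsto_inv_atTop_zero
    have h2 : Filter.Tendsto (fun η : ℝ => Real.log η / η) Filter.atTop (nhds 0) :=
      Real.isLittleO_log_id_atTop.tendsto_div_nhds_zero
    have := ((h1.const_mul (-(C + K - K * Real.log δ))).add (h2.const_mul (-K)))
    simpa using this
  have hgint : IntegrableOn g (Ioi δ) :=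
    integrableOn_Ioi_deriv_of_nonneg' hFderiv hg_nonneg hFtendsto
  have hgval : (∫ η in Ioi δ, g η) = (C + K) / δ := by
    rw [integral_Ioi_of_hasDerivAt_of_nonneg' hFderiv hg_nonneg hFtendsto]
    rw [hFdef]
    simp only
    rw [div_self hδ0.ne', Real.log_one]
    field_simp
    ring
  -- continuity hence measurability of the integrand on Ioi δ
  set f : ℝ → ℝ := fun η => moc1 δ γ η / η ^ 2 with hfdef
  have hfcont : ContinuousOn f (Ioi δ) := by
    have hφ : ContinuousOn (fun η => (C + ∫ t in δ..η, h t) / η ^ 2) (Ioi δ) := by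
      intro η hη
      have hη0 : 0 < η := hδ0.trans hη
      have hH : ContinuousAt (fun u => ∫ t in δ..u, h t) η := by
        have hopen : ContinuousOn h (Ioi δ) := hhcont.mono Ioi_subset_Ici_self
        have hca : ContinuousAt h η := hopen.continuousAt (Ioi_mem_nhds hη)
        exact (intervalIntegral.integral_hasDerivAt_right (hint η (le_of_lt hη))
          (ContinuousAt.stronglyMeasurableAtFilter isOpen_Ioi (fun x hx => hopen.continuousAt (Ioi_mem_nhds hx)) η hη) hca).continuousAt
      exact (((continuousAt_const.add hH).div (continuousAt_pow _ _) (by positivity))).continuousWithinAt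
    apply hφ.congr
    intro η hη
    rw [hfdef]
    simp only
    rw [hmoc η hη]
  have hfmeas : AEStronglyMeasurable f (volume.restrict (Ioi δ)) :=
    hfcont.aestronglyMeasurable measurableSet_Ioi
  have hfg : ∀ η ∈ Ioi δ, f η ≤ g η := by
    intro η hη
    have hη0 : 0 < η := hδ0.trans hη
    rw [hfdef, hgdef]
    have h2 : (0:ℝ) < η ^ 2 := by positivity
    exact div_le_div_of_nonneg_right (hmoc_le η hη) h2.le |>.trans_eq rfl
  have hfint : IntegrableOn f (Ioi δ) := by
    apply Integrable.mono' hgint hfmeas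
    rw [ae_restrict_iff' measurableSet_Ioi]
    filter_upwards with η hη
    rw [Real.norm_eq_abs, abs_of_nonneg (div_nonneg (hmoc_nonneg η hη) (sq_nonneg _))]
    exact hfg η hη
  have hmain : (∫ η in Ioi δ, f η) ≤ (C + K) / δ := by
    rw [← hgval]
    exact setIntegral_mono_on hfint hgint measurableSet_Ioi hfg
  have hsplit : (C + K) / δ = C / δ + γ / (4 * δ) := by
    rw [hKdef]; field_simp
  refine ⟨hmain.trans_eq hsplit, ?_⟩
  have h1 : C / δ ≤ 1 := (div_le_one hδ0).2 hCδ
  have h2 : γ / (4 * δ) ≤ 1 / 4 := by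
    rw [div_le_div_iff₀ (by linarith) (by norm_num)]
    linarith
  calc (∫ η in Ioi δ, f η) ≤ C / δ + γ / (4 * δ) := hmain.trans_eq hsplit
    _ ≤ 2 := by linarith
end
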